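/- Lazarevic's inequality: for all real y ≠ 0 and all real p ≥ 3, cosh(y) ≤ (sinh(y)/y)^p. -/

import Mathlib

/-!
Since `sinh y / y ≥ 1`, it suffices to take `p = 3`, and by evenness `y > 0`. With `w = e^{2y}`,
the inequality `y³ cosh y ≤ sinh³ y` reads `4 y³ w (w + 1) ≤ (w - 1)³`. The difference of the
two sides is a monic cubic in `w`, so it stays nonnegative past any point where it and its first
two derivatives are nonnegative; the degree-5 Taylor polynomial of `e^{2y}` is such a point.
-/

open Real

lemma four_mul_mul_add_one_le_sub_one_pow_three_of_le {c Q w : ℝ} (hQw : Q ≤ w)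
    (hconvex : 4 * c ≤ 3 * (Q - 1)) (hderiv : 4 * c * (2 * Q + 1) ≤ 3 * (Q - 1) ^ 2)
    (hQ : 4 * c * Q * (Q + 1) ≤ (Q - 1) ^ 3) :
    4 * c * w * (w + 1) ≤ (w - 1) ^ 3 := by
  have hwQ : 0 ≤ w - Q := sub_nonneg.2 hQw
  -- with `g w = (w - 1)³ - 4 c w (w + 1)`, this is `(g w - g Q) / (w - Q)`
  have hquot : 0 ≤ w ^ 2 + w * Q + Q ^ 2 - 3 * (w + Q) + 3 - 4 * c * (w + Q + 1) := by
    nlinarith [mul_nonneg hwQ (by linarith : (0 : ℝ) ≤ w + 2 * Q - 3 - 4 * c)]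
  nlinarith [mul_nonneg hwQ hquot]

lemma taylor_le_exp_sq {y : ℝ} (hy : 0 ≤ y) :
    1 + 2 * y + 2 * y ^ 2 + 4 / 3 * y ^ 3 + 2 / 3 * y ^ 4 + 4 / 15 * y ^ 5 ≤ exp y ^ 2 := by
  have h := sum_le_exp_of_nonneg (by positivity : (0 : ℝ) ≤ 2 * y) 6
  rw [← exp_nat_mul, Nat.cast_ofNat]
  convert h using 1
  simp only [Finset.sum_range_succ, Finset.sum_range_zero, Nat.factorial]
  push_cast
  ring

lemma four_mul_pow_three_mul_exp_sq_le {y : ℝ} (hy : 0 ≤ y) :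
    4 * y ^ 3 * exp y ^ 2 * (exp y ^ 2 + 1) ≤ (exp y ^ 2 - 1) ^ 3 := by
  apply four_mul_mul_add_one_le_sub_one_pow_three_of_le (taylor_le_exp_sq hy)
  · nlinarith [pow_nonneg hy 2, pow_nonneg hy 4, pow_nonneg hy 5]
  · nlinarith [pow_nonneg hy 2, pow_nonneg hy 3, pow_nonneg hy 4, pow_nonneg hy 5,
      pow_nonneg hy 6, pow_nonneg hy 7, pow_nonneg hy 8, pow_nonneg hy 9, pow_nonneg hy 10]
  · nlinarith [pow_nonneg hy 7, pow_nonneg hy 8, pow_nonneg hy 9, pow_nonneg hy 10,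
      pow_nonneg hy 11, pow_nonneg hy 12, pow_nonneg hy 13, pow_nonneg hy 14, pow_nonneg hy 15]

lemma pow_three_mul_cosh_le_sinh_pow_three {y : ℝ} (hy : 0 ≤ y) :
    y ^ 3 * cosh y ≤ sinh y ^ 3 := by
  have hE : 0 < exp y := exp_pos y
  have hgap : sinh y ^ 3 - y ^ 3 * cosh y
      = ((exp y ^ 2 - 1) ^ 3 - 4 * y ^ 3 * exp y ^ 2 * (exp y ^ 2 + 1)) / (8 * exp y ^ 3) := by
    rw [sinh_eq, cosh_eq, exp_neg]
    field_simp
    ring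
  rw [← sub_nonneg, hgap]
  exact div_nonneg (sub_nonneg.2 (four_mul_pow_three_mul_exp_sq_le hy)) (by positivity)

lemma cosh_le_sinh_div_self_pow_three {y : ℝ} (hy : y ≠ 0) : cosh y ≤ (sinh y / y) ^ 3 := by
  wlog hpos : 0 < y generalizing y
  · have hneg : 0 < -y := neg_pos.2 (hy.lt_or_gt.resolve_right hpos)
    simpa [neg_div_neg_eq] using this (neg_ne_zero.2 hy) hneg
  rw [div_pow, le_div_iff₀ (by positivity), mul_comm]
  exact pow_three_mul_cosh_le_sinh_pow_three hpos.le

lemma one_le_sinh_div_self {y : ℝ} (hy : y ≠ 0) : 1 ≤ sinh y / y := by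
  rcases hy.lt_or_gt with hneg | hpos
  · rw [le_div_iff_of_neg hneg, one_mul]
    exact le_of_lt (sinh_lt_self_iff.2 hneg)
  · rw [le_div_iff₀ hpos, one_mul]
    exact self_le_sinh_iff.2 hpos.le

theorem stmt_17 (y p : ℝ) (hy : y ≠ 0) (hp : 3 ≤ p) :
    Real.cosh y ≤ (Real.sinh y / y) ^ p := by
  calc Real.cosh y ≤ (Real.sinh y / y) ^ (3 : ℕ) := cosh_le_sinh_div_self_pow_three hy
    _ = (Real.sinh y / y) ^ ((3 : ℕ) : ℝ) := (rpow_natCast _ 3).symm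
    _ ≤ (Real.sinh y / y) ^ p :=
      rpow_le_rpow_of_exponent_le (one_le_sinh_div_self hy) (by exact_mod_cast hp)
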